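/- Let U be a random variable bounded in absolute value by B, and let V̂ = (1/n)∑_{i=1}^n (U_i − Ū)² be the biased sample variance of n i.i.d. copies of U. Then for all γ > 0, P((n/(n−1)) V̂ ≥ Var(U) − γ) ≥ 1 − exp(−(n−1)γ²/(8B² Var(U))). -/

import Mathlib

/-!
Hoeffding's representation of the unbiased sample variance: fix ⌊n/2⌋ disjoint pairs
`(a k, b k)` of indices; the estimator `(1/⌊n/2⌋) ∑ₖ (U_{σ a k} - U_{σ b k})² / 2`, averaged
over all permutations `σ` of the sample, is the unbiased sample variance. For fixed `σ` it is an
average of ⌊n/2⌋ independent variables `W ∈ [0, 2B²]` with mean `Var U`, and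
`exp (-y) ≤ 1 - y + y² / 2` together with `W² ≤ 2B² W` gives
`E exp (-s W) ≤ exp (-s Var U + s² B² Var U)`. Convexity of `exp` passes this bound on to the
average over `σ`, and the Chernoff bound at the optimal parameter gives the lower tail
`exp (-⌊n/2⌋ γ² / (4 B² Var U))`, which suffices since `2 ⌊n/2⌋ ≥ n - 1`.
-/

open MeasureTheory ProbabilityTheory Finset

namespace Equiv.Perm

variable {α : Type*}

theorem sum_sum_comp_eq [Fintype α] {M : Type*} [AddCommMonoid M] (f : α → α → M)
    (σ : Perm α) : ∑ i, ∑ j, f (σ i) (σ j) = ∑ i, ∑ j, f i j :=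
  (Equiv.sum_comp σ fun i => ∑ j, f i (σ j)).trans
    (sum_congr rfl fun i _ => Equiv.sum_comp σ (f i))

variable [DecidableEq α]

theorem exists_apply_eq_apply_eq {i j i' j' : α} (hij : i ≠ j) (hij' : i' ≠ j') :
    ∃ τ : Perm α, τ i = i' ∧ τ j = j' := by
  set k := swap i i' j
  have hk : k ≠ i' := by
    rcases eq_or_ne j i' with rfl | hji'
    · simpa [k, swap_apply_right] using hij
    · simpa [k, swap_apply_of_ne_of_ne (Ne.symm hij) hji'] using hji'
  refine ⟨(swap i i').trans (swap k j'), ?_, swap_apply_left k j'⟩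
  simpa using swap_apply_of_ne_of_ne (Ne.symm hk) hij'

variable [Fintype α] {M : Type*} [AddCommMonoid M]

theorem sum_comp_pair_eq_of_ne (f : α → α → M) {i j i' j' : α} (hij : i ≠ j) (hij' : i' ≠ j') :
    ∑ σ : Perm α, f (σ i) (σ j) = ∑ σ : Perm α, f (σ i') (σ j') := by
  obtain ⟨τ, hτi, hτj⟩ := exists_apply_eq_apply_eq hij' hij
  exact Fintype.sum_equiv (Equiv.mulRight τ) _ _ fun σ => by simp [mul_apply, hτi, hτj]

theorem card_mul_pred_smul_sum_comp_pair (f : α → α → M) (hf : ∀ i, f i i = 0) {i j : α}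
    (hij : i ≠ j) :
    (Fintype.card α * (Fintype.card α - 1)) • ∑ σ : Perm α, f (σ i) (σ j) =
      (Fintype.card α).factorial • ∑ i', ∑ j', f i' j' := by
  set S := fun i' j' => ∑ σ : Perm α, f (σ i') (σ j')
  have hrow : ∀ i', ∑ j', S i' j' = (Fintype.card α - 1) • S i j := by
    intro i'
    rw [← sum_erase univ (a := i') (by simp [S, hf]), ← card_univ,
      ← card_erase_of_mem (mem_univ i'), ← sum_const]
    exact sum_congr rfl fun j' hj' => sum_comp_pair_eq_of_ne f (ne_of_mem_erase hj').symm hij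
  have htotal : ∑ i', ∑ j', S i' j' = (Fintype.card α).factorial • ∑ i', ∑ j', f i' j' := by
    simp only [S]
    rw [sum_congr rfl fun _ _ => sum_comm, sum_comm,
      sum_congr rfl fun σ _ => sum_sum_comp_eq f σ, sum_const, card_univ, Fintype.card_perm]
  rw [← htotal, sum_congr rfl fun i' _ => hrow i', sum_const, card_univ, smul_smul]

end Equiv.Perm

theorem sum_sum_sub_sq {α : Type*} [Fintype α] (u : α → ℝ) :
    ∑ i, ∑ j, (u i - u j) ^ 2 =
      2 * Fintype.card α * ∑ i, (u i - (∑ j, u j) / Fintype.card α) ^ 2 := by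
  rcases isEmpty_or_nonempty α with hα | hα
  · simp
  have hn : (Fintype.card α : ℝ) ≠ 0 := Nat.cast_ne_zero.mpr Fintype.card_ne_zero
  simp only [sub_sq, sum_add_distrib, sum_sub_distrib, ← mul_sum, ← sum_mul, sum_const,
    card_univ, nsmul_eq_mul, div_pow]
  field_simp
  ring

noncomputable def pairedVariance {κ α : Type*} [Fintype κ] (e : κ × Fin 2 → α) (u : α → ℝ) : ℝ :=
  (∑ k, (u (e (k, 0)) - u (e (k, 1))) ^ 2 / 2) / Fintype.card κ

theorem pairedVariance_nonneg {κ α : Type*} [Fintype κ] (e : κ × Fin 2 → α) (u : α → ℝ) :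
    0 ≤ pairedVariance e u := by
  unfold pairedVariance
  positivity

theorem sum_perm_pairedVariance {κ α : Type*} [Fintype κ] [Nonempty κ] [Fintype α]
    [DecidableEq α] {e : κ × Fin 2 → α} (he : e.Injective) (u : α → ℝ) :
    (∑ σ : Equiv.Perm α, pairedVariance (σ ∘ e) u) / Fintype.card (Equiv.Perm α) =
      (∑ i, (u i - (∑ j, u j) / Fintype.card α) ^ 2) / (Fintype.card α - 1) := by
  obtain ⟨k₀⟩ := ‹Nonempty κ›
  have hne : ∀ k, e (k, 0) ≠ e (k, 1) := fun k h => by simpa using he h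
  have hn : (1 : ℝ) < Fintype.card α := by
    exact_mod_cast Fintype.one_lt_card_iff.mpr ⟨_, _, hne k₀⟩
  set n := Fintype.card α
  set Q := ∑ i, (u i - (∑ j, u j) / n) ^ 2
  have hpair : ∀ k, ∑ σ : Equiv.Perm α, (u (σ (e (k, 0))) - u (σ (e (k, 1)))) ^ 2 =
      2 * n.factorial * Q / (n - 1) := by
    intro k
    have := Equiv.Perm.card_mul_pred_smul_sum_comp_pair (fun i j => (u i - u j) ^ 2)
      (fun i => by simp) (hne k)
    rw [nsmul_eq_mul, nsmul_eq_mul, sum_sum_sub_sq,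
      Nat.cast_mul, Nat.cast_pred (Fintype.card_pos_iff.mpr ⟨e (k, 0)⟩)] at this
    rw [eq_div_iff (by linarith)]
    exact mul_left_cancel₀ (by positivity : (n : ℝ) ≠ 0) (by linear_combination this)
  simp only [pairedVariance, Function.comp_apply, Fintype.card_perm, ← sum_div]
  rw [sum_comm, sum_congr rfl fun k _ => hpair k, sum_const, card_univ, nsmul_eq_mul]
  have : (Fintype.card κ : ℝ) ≠ 0 := by positivity
  have : (n.factorial : ℝ) ≠ 0 := by positivity
  field_simp
  ring

theorem Real.exp_neg_le_one_sub_add_sq_div_two {y : ℝ} (hy : 0 ≤ y) :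
    Real.exp (-y) ≤ 1 - y + y ^ 2 / 2 := by
  have hmul : Real.exp (-y) * Real.exp y = 1 := by
    rw [← Real.exp_add, neg_add_cancel, Real.exp_zero]
  -- `(1 - y + y² / 2) * (1 + y + y² / 2) = 1 + y⁴ / 4`
  nlinarith [Real.quadratic_le_exp_of_nonneg hy, Real.exp_pos (-y), pow_nonneg hy 4]

namespace ProbabilityTheory

variable {Ω : Type*} [MeasurableSpace Ω] {μ : Measure Ω}

theorem mgf_neg_le_of_ae_mem_Icc [IsProbabilityMeasure μ] {W : Ω → ℝ} {c t : ℝ}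
    (hWm : AEStronglyMeasurable W μ) (hW : ∀ᵐ ω ∂μ, W ω ∈ Set.Icc 0 c) (ht : 0 ≤ t) :
    mgf W μ (-t) ≤ Real.exp (-t * μ[W] + t ^ 2 * c * μ[W] / 2) := by
  set a := -t + t ^ 2 * c / 2
  have hWint : Integrable W μ := by
    refine (integrable_const c).mono' hWm ?_
    filter_upwards [hW] with ω hω
    rw [Real.norm_eq_abs, abs_of_nonneg hω.1]
    exact hω.2
  have hpoint : ∀ᵐ ω ∂μ, Real.exp (-t * W ω) ≤ 1 + a * W ω := by
    filter_upwards [hW] with ω ⟨h0, hc⟩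
    have hsq : W ω ^ 2 ≤ c * W ω := by nlinarith
    calc Real.exp (-t * W ω) ≤ 1 - t * W ω + (t * W ω) ^ 2 / 2 := by
          rw [neg_mul]; exact Real.exp_neg_le_one_sub_add_sq_div_two (mul_nonneg ht h0)
      _ ≤ 1 + a * W ω := by simp only [a]; nlinarith [sq_nonneg t]
  calc mgf W μ (-t) ≤ ∫ ω, (1 + a * W ω) ∂μ :=
        integral_mono_of_nonneg (.of_forall fun ω => (Real.exp_pos _).le)
          ((integrable_const 1).add (hWint.const_mul a)) hpoint
    _ = 1 + a * μ[W] := by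
        rw [integral_add (integrable_const 1) (hWint.const_mul a), integral_const_mul]
        simp
    _ ≤ Real.exp (a * μ[W]) := by linarith [Real.add_one_le_exp (a * μ[W])]
    _ = Real.exp (-t * μ[W] + t ^ 2 * c * μ[W] / 2) := by simp only [a]; ring_nf

theorem IndepFun.integral_sq_sub [IsProbabilityMeasure μ] {X Y : Ω → ℝ} (hXY : IndepFun X Y μ)
    (hX : MemLp X 2 μ) (hY : MemLp Y 2 μ) (hmean : μ[X] = μ[Y]) :
    ∫ ω, (X ω - Y ω) ^ 2 ∂μ = variance X μ + variance Y μ := by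
  have h := variance_eq_sub (hX.sub hY)
  have hmean_sub : μ[X - Y] = 0 := by
    rw [integral_sub' (hX.integrable one_le_two) (hY.integrable one_le_two), hmean, sub_self]
  rw [variance_sub hX hY, hXY.covariance_eq_zero hX hY, hmean_sub] at h
  simp only [Pi.pow_apply, Pi.sub_apply] at h
  linarith

theorem iIndepFun.curry {ι κ 𝓧 : Type*} [MeasurableSpace 𝓧] {X : ι × κ → Ω → 𝓧}
    (hmeas : ∀ p, Measurable (X p)) (hindep : iIndepFun X μ) :
    iIndepFun (fun i ω j => X (i, j) ω) μ := by
  have := hindep.isProbabilityMeasure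
  have _ p := Measure.isProbabilityMeasure_map (μ := μ) (hmeas p).aemeasurable
  rw [iIndepFun_iff_map_fun_eq_infinitePi_map fun i => by fun_prop]
  have hcurry : (fun ω i j => X (i, j) ω) = MeasurableEquiv.curry ι κ 𝓧 ∘ fun ω p => X p ω := rfl
  rw [hcurry, ← Measure.map_map (by fun_prop) (by fun_prop),
    hindep.map_fun_eq_infinitePi_map hmeas,
    Measure.infinitePi_map_curry fun i j => μ.map (X (i, j))]
  congr with i : 1
  exact ((hindep.precomp (Prod.mk_right_injective i)).map_fun_eq_infinitePi_map
    fun j => hmeas _).symm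

theorem integrable_exp_neg_mul_of_nonneg [IsFiniteMeasure μ] {V : Ω → ℝ} {t : ℝ}
    (hV : AEMeasurable V μ) (hV0 : ∀ᵐ ω ∂μ, 0 ≤ V ω) (ht : 0 ≤ t) :
    Integrable (fun ω => Real.exp (-t * V ω)) μ := by
  simpa [mul_comm] using integrable_exp_mul_of_le t 0 ht hV.neg (by simpa using hV0)

theorem mgf_sum_div_card_le {ι : Type*} [Fintype ι] [Nonempty ι] {T : ι → Ω → ℝ} {t : ℝ}
    (hT : ∀ i, Integrable (fun ω => Real.exp (t * T i ω)) μ) :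
    mgf (fun ω => (∑ i, T i ω) / Fintype.card ι) μ t ≤ (∑ i, mgf (T i) μ t) / Fintype.card ι := by
  have hN : (0 : ℝ) < Fintype.card ι := by positivity
  have hjensen : ∀ ω, Real.exp (t * ((∑ i, T i ω) / Fintype.card ι)) ≤
      (∑ i, Real.exp (t * T i ω)) / Fintype.card ι := by
    intro ω
    have := convexOn_exp.map_sum_le (t := univ) (w := fun _ => (Fintype.card ι : ℝ)⁻¹)
      (p := fun i => t * T i ω) (fun _ _ => by positivity) (by simp [hN.ne'])
      (fun _ _ => Set.mem_univ _)
    simpa [← mul_sum, ← sum_div, div_eq_inv_mul, mul_left_comm t] using this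
  calc mgf (fun ω => (∑ i, T i ω) / Fintype.card ι) μ t
      ≤ ∫ ω, (∑ i, Real.exp (t * T i ω)) / Fintype.card ι ∂μ :=
        integral_mono_of_nonneg (.of_forall fun _ => (Real.exp_pos _).le)
          ((integrable_finsetSum _ fun i _ => hT i).div_const _) (.of_forall hjensen)
    _ = (∑ i, mgf (T i) μ t) / Fintype.card ι := by
        rw [integral_div, integral_finsetSum _ fun i _ => hT i]
        rfl

theorem ofReal_one_sub_exp_le_measure_ge [IsProbabilityMeasure μ] {V : Ω → ℝ} {a κ γ : ℝ}
    (hV : Measurable V) (hκ : 0 < κ) (hγ : 0 ≤ γ)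
    (hint : ∀ t, 0 ≤ t → Integrable (fun ω => Real.exp (-t * V ω)) μ)
    (hmgf : ∀ t, 0 ≤ t → mgf V μ (-t) ≤ Real.exp (-t * a + t ^ 2 * κ)) :
    ENNReal.ofReal (1 - Real.exp (-γ ^ 2 / (4 * κ))) ≤ μ {ω | V ω ≥ a - γ} := by
  set t := γ / (2 * κ)
  have ht : 0 ≤ t := by positivity
  have hlow : μ.real {ω | V ω ≤ a - γ} ≤ Real.exp (-γ ^ 2 / (4 * κ)) :=
    calc μ.real {ω | V ω ≤ a - γ} ≤ Real.exp (-(-t) * (a - γ)) * mgf V μ (-t) :=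
          measure_le_le_exp_mul_mgf _ (neg_nonpos.mpr ht) (hint t ht)
      _ ≤ Real.exp (-(-t) * (a - γ)) * Real.exp (-t * a + t ^ 2 * κ) := by
          gcongr; exact hmgf t ht
      _ = Real.exp (-γ ^ 2 / (4 * κ)) := by
          rw [← Real.exp_add]; congr 1; simp only [t]; field_simp; ring
  have hcompl : {ω | V ω ≤ a - γ}ᶜ ⊆ {ω | V ω ≥ a - γ} := fun _ hω =>
    (not_le.mp (Set.notMem_ofPred_iff.mp hω)).le
  calc ENNReal.ofReal (1 - Real.exp (-γ ^ 2 / (4 * κ)))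
      ≤ ENNReal.ofReal (μ.real {ω | V ω ≤ a - γ}ᶜ) := by
        rw [probReal_compl_eq_one_sub (measurableSet_le hV measurable_const)]
        gcongr
    _ ≤ μ {ω | V ω ≥ a - γ} := by
        rw [ofReal_measureReal]
        exact measure_mono hcompl

theorem IndepFun.mgf_sq_sub_div_two_neg_le [IsProbabilityMeasure μ] {X Y X₀ : Ω → ℝ} {B s : ℝ}
    (hXY : IndepFun X Y μ) (hXm : Measurable X) (hYm : Measurable Y)
    (hXB : ∀ᵐ ω ∂μ, |X ω| ≤ B) (hYB : ∀ᵐ ω ∂μ, |Y ω| ≤ B)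
    (hX : IdentDistrib X X₀ μ μ) (hY : IdentDistrib Y X₀ μ μ) (hs : 0 ≤ s) :
    mgf (fun ω => (X ω - Y ω) ^ 2 / 2) μ (-s) ≤
      Real.exp (-s * variance X₀ μ + s ^ 2 * B ^ 2 * variance X₀ μ) := by
  have hmean : ∫ ω, (X ω - Y ω) ^ 2 / 2 ∂μ = variance X₀ μ := by
    rw [integral_div, hXY.integral_sq_sub (.of_bound hXm.aestronglyMeasurable B (by simpa))
      (.of_bound hYm.aestronglyMeasurable B (by simpa))
      (by rw [hX.integral_eq, hY.integral_eq]), hX.variance_eq, hY.variance_eq]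
    ring
  have hIcc : ∀ᵐ ω ∂μ, (X ω - Y ω) ^ 2 / 2 ∈ Set.Icc 0 (2 * B ^ 2) := by
    filter_upwards [hXB, hYB] with ω hXω hYω
    obtain ⟨hX₁, hX₂⟩ := abs_le.mp hXω
    obtain ⟨hY₁, hY₂⟩ := abs_le.mp hYω
    exact ⟨by positivity, by nlinarith⟩
  have := mgf_neg_le_of_ae_mem_Icc (by fun_prop) hIcc hs
  rw [hmean] at this
  exact this.trans_eq (by ring_nf)

theorem measurable_pairedVariance {α κ : Type*} [Fintype κ] {X : α → Ω → ℝ}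
    (hmeas : ∀ i, Measurable (X i)) (e : κ × Fin 2 → α) :
    Measurable fun ω => pairedVariance e (X · ω) := by
  unfold pairedVariance
  fun_prop

theorem mgf_pairedVariance_neg_le {α κ : Type*} [Fintype κ] [Nonempty κ] {X : α → Ω → ℝ}
    {X₀ : Ω → ℝ} {B t : ℝ} (hmeas : ∀ i, Measurable (X i))
    (hbound : ∀ i, ∀ᵐ ω ∂μ, |X i ω| ≤ B) (hident : ∀ i, IdentDistrib (X i) X₀ μ μ)
    (hindep : iIndepFun X μ) {e : κ × Fin 2 → α} (he : e.Injective) (ht : 0 ≤ t) :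
    mgf (fun ω => pairedVariance e (X · ω)) μ (-t) ≤
      Real.exp (-t * variance X₀ μ + t ^ 2 * B ^ 2 * variance X₀ μ / Fintype.card κ) := by
  have := hindep.isProbabilityMeasure
  set v := variance X₀ μ
  set m : ℝ := (Fintype.card κ : ℝ)
  have hm : 0 < m := by positivity
  set Y : κ → Ω → ℝ := fun k ω => (X (e (k, 0)) ω - X (e (k, 1)) ω) ^ 2 / 2
  have hYmeas : ∀ k, Measurable (Y k) := fun k => by fun_prop
  have hYindep : iIndepFun Y μ :=
    ((hindep.precomp he).curry fun p => hmeas _).comp (fun _ x => (x 0 - x 1) ^ 2 / 2)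
      fun _ => by fun_prop
  have hpaired : (fun ω => pairedVariance e (X · ω)) = fun ω => m⁻¹ * (∑ k, Y k) ω := by
    ext ω
    simp [pairedVariance, Y, div_eq_inv_mul, m]
  calc mgf (fun ω => pairedVariance e (X · ω)) μ (-t)
      = ∏ k, mgf (Y k) μ (-(t / m)) := by
        rw [hpaired, mgf_const_mul, hYindep.mgf_sum hYmeas]
        ring_nf
    _ ≤ ∏ _k : κ, Real.exp (-(t / m) * v + (t / m) ^ 2 * B ^ 2 * v) :=
        prod_le_prod (fun _ _ => mgf_nonneg) fun k _ =>
          (hindep.indepFun (he.ne (by simp))).mgf_sq_sub_div_two_neg_le (hmeas _) (hmeas _)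
            (hbound _) (hbound _) (hident _) (hident _) (div_nonneg ht hm.le)
    _ = Real.exp (-t * v + t ^ 2 * B ^ 2 * v / m) := by
        rw [prod_const, card_univ, ← Real.exp_nat_mul]
        congr 1
        field_simp
        ring

theorem mgf_average_pairedVariance_neg_le {α κ : Type*} [Fintype α] [DecidableEq α] [Fintype κ]
    [Nonempty κ] {X : α → Ω → ℝ} {X₀ : Ω → ℝ} {B t : ℝ} (hmeas : ∀ i, Measurable (X i))
    (hbound : ∀ i, ∀ᵐ ω ∂μ, |X i ω| ≤ B) (hident : ∀ i, IdentDistrib (X i) X₀ μ μ)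
    (hindep : iIndepFun X μ) {e : κ × Fin 2 → α} (he : e.Injective) (ht : 0 ≤ t) :
    mgf (fun ω => (∑ σ : Equiv.Perm α, pairedVariance (σ ∘ e) (X · ω)) /
        Fintype.card (Equiv.Perm α)) μ (-t) ≤
      Real.exp (-t * variance X₀ μ + t ^ 2 * B ^ 2 * variance X₀ μ / Fintype.card κ) := by
  have := hindep.isProbabilityMeasure
  set c := -t * variance X₀ μ + t ^ 2 * B ^ 2 * variance X₀ μ / Fintype.card κ
  calc _ ≤ (∑ σ : Equiv.Perm α, mgf (fun ω => pairedVariance (σ ∘ e) (X · ω)) μ (-t)) /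
          Fintype.card (Equiv.Perm α) :=
        mgf_sum_div_card_le fun σ => integrable_exp_neg_mul_of_nonneg
          (measurable_pairedVariance hmeas _).aemeasurable
          (.of_forall fun _ => pairedVariance_nonneg _ _) ht
    _ ≤ (∑ _σ : Equiv.Perm α, Real.exp c) / Fintype.card (Equiv.Perm α) := by
        gcongr with σ
        exact mgf_pairedVariance_neg_le hmeas hbound hident hindep (σ.injective.comp he) ht
    _ = Real.exp c := by
        rw [sum_const, card_univ, nsmul_eq_mul, mul_div_cancel_left₀ _ (by positivity)]

end ProbabilityTheory

theorem maurer_pontil_variance_lower_tail {Ω : Type*} [MeasurableSpace Ω] (μ : Measure Ω)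
    [IsProbabilityMeasure μ] (n : ℕ) (hn : 2 ≤ n) (B : ℝ) (hB : 0 < B)
    (U : Fin n → Ω → ℝ) (U₀ : Ω → ℝ)
    (hmeas : ∀ i, Measurable (U i))
    (hbound : ∀ i, ∀ᵐ ω ∂μ, |U i ω| ≤ B)
    (hident : ∀ i, IdentDistrib (U i) U₀ μ μ)
    (hindep : iIndepFun U μ)
    (hvar : 0 < variance U₀ μ)
    (γ : ℝ) (hγ : 0 < γ) :
    ENNReal.ofReal
        (1 - Real.exp (-((n : ℝ) - 1) * γ ^ 2 / (8 * B ^ 2 * variance U₀ μ))) ≤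
      μ {ω | ((n : ℝ) / ((n : ℝ) - 1)) *
            ((1 / (n : ℝ)) * ∑ i, (U i ω - (∑ j, U j ω) / n) ^ 2)
          ≥ variance U₀ μ - γ} := by
  set v := variance U₀ μ
  have : Nonempty (Fin (n / 2)) := ⟨⟨0, by omega⟩⟩
  obtain ⟨e⟩ : Nonempty (Fin (n / 2) × Fin 2 ↪ Fin n) :=
    Function.Embedding.nonempty_of_card_le (by simp; omega)
  set V : Ω → ℝ := fun ω => (∑ σ : Equiv.Perm (Fin n), pairedVariance (σ ∘ e) (U · ω)) /
    Fintype.card (Equiv.Perm (Fin n))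
  have hn1 : (n : ℝ) - 1 ≠ 0 := sub_ne_zero.mpr (mod_cast (by omega : n ≠ 1))
  have hV : ∀ ω, ((n : ℝ) / ((n : ℝ) - 1)) *
      ((1 / (n : ℝ)) * ∑ i, (U i ω - (∑ j, U j ω) / n) ^ 2) = V ω := fun ω => by
    simp only [V, sum_perm_pairedVariance e.injective, Fintype.card_fin]
    field_simp
  have hVmeas : Measurable V :=
    (Finset.measurable_fun_sum _ fun σ _ => measurable_pairedVariance hmeas _).div_const _
  have hV0 : ∀ ω, 0 ≤ V ω := fun ω =>
    div_nonneg (sum_nonneg fun σ _ => pairedVariance_nonneg _ _) (by positivity)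
  have hm : (0 : ℝ) < (n / 2 : ℕ) := mod_cast (by omega : 0 < n / 2)
  have h2m : (n : ℝ) ≤ 2 * (n / 2 : ℕ) + 1 := mod_cast (by omega : n ≤ 2 * (n / 2) + 1)
  simp only [hV]
  refine le_trans ?_ (ofReal_one_sub_exp_le_measure_ge (κ := B ^ 2 * v / (n / 2 : ℕ)) hVmeas
    (by positivity) hγ.le (fun t ht => integrable_exp_neg_mul_of_nonneg hVmeas.aemeasurable
      (.of_forall hV0) ht) fun t ht => ?_)
  · gcongr ENNReal.ofReal (1 - Real.exp ?_)
    calc -γ ^ 2 / (4 * (B ^ 2 * v / (n / 2 : ℕ)))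
        = -(2 * (n / 2 : ℕ)) * γ ^ 2 / (8 * B ^ 2 * v) := by field_simp; ring
      _ ≤ -((n : ℝ) - 1) * γ ^ 2 / (8 * B ^ 2 * v) := by gcongr; linarith
  · refine (mgf_average_pairedVariance_neg_le hmeas hbound hident hindep e.injective
      ht).trans_eq ?_
    simp only [v, Fintype.card_fin]
    ring_nf
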